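/- Suppose Σ_{γ: r(γ) ≤ x} ⟨γ⟩^n = B_m e^x x^m + O(e^x x^{m-1}) when n = 2m, and the n-th power sums are O(e^x x^m) when n = 2m+1, and suppose each |⟨γ⟩| = O(r(γ)). Then the weighted sums Σ_{γ: r(γ)≤x} ⟨γ⟩^n / r(γ)^{n/2} = B_m e^x + O(e^x/x) for n = 2m, and are O(e^x x^{-1/2}) for n odd, as x → ∞. -/

import Mathlib

/-!
Partial summation. Put `S(x) = ∑_{r γ ≤ x} f γ`. For `k ≠ 0` and `x ≥ 1`, writing
`r γ ^ (-k) - x ^ (-k) = k ∫_{r γ}^x t ^ (-k-1) dt` (for `r γ ≥ 1`) and summing gives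
`∑_{r γ ≤ x} f γ / r γ ^ k - S(x) / x ^ k = k ∫_1^x S(t) t ^ (-k-1) dt + C` with `C` independent
of `x`. If `S(t) = O(eᵗ tᵏ)` the integrand is `O(eᵗ / t)`, and `∫_1^x eᵗ / t dt = O(eˣ / x)`.
With `f = aⁿ` and `k = n / 2`, the main term `S(x) / x ^ (n/2)` is `B_m eˣ + O(eˣ / x)` for
`n = 2m` and `O(eˣ x^(-1/2))` for `n = 2m + 1`.
-/

open Filter Asymptotics Real MeasureTheory

theorem continuousOn_exp_div : ContinuousOn (fun t => exp t / t) (Set.Ioi 0) :=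
  continuous_exp.continuousOn.div continuousOn_id fun _ ht => ht.ne'

theorem integral_exp_div_le {y x : ℝ} (hy : 2 ≤ y) (hyx : y ≤ x) :
    ∫ t in y..x, exp t / t ≤ 2 * (exp x / x) := by
  have hpos : Set.Icc y x ⊆ Set.Ioi 0 := fun t ht => show (0 : ℝ) < t by linarith [ht.1]
  -- `2 eᵗ / t` has derivative `2 eᵗ (t - 1) / t²`, which dominates `eᵗ / t` once `t ≥ 2`.
  have key := intervalIntegral.integral_le_sub_of_hasDeriv_right_of_le hyx
    (g := fun t => 2 * (exp t / t)) (g' := fun t => 2 * ((exp t * t - exp t * 1) / t ^ 2))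
    (φ := fun t => exp t / t) (continuousOn_const.mul (continuousOn_exp_div.mono hpos))
    (fun t ht => (((hasDerivAt_exp t).div (hasDerivAt_id t)
      (hpos (Set.Ioo_subset_Icc_self ht)).ne').const_mul 2).hasDerivWithinAt)
    ((continuousOn_exp_div.mono hpos).integrableOn_Icc)
    (fun t ht => by
      have ht0 : 0 < t := hpos (Set.Ioo_subset_Icc_self ht)
      have ht2 : 2 ≤ t := hy.trans ht.1.le
      rw [mul_div_assoc', div_le_div_iff₀ ht0 (by positivity)]
      nlinarith [mul_nonneg (mul_nonneg (exp_pos t).le ht0.le) (sub_nonneg.2 ht2)])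
  have : 0 ≤ 2 * (exp y / y) := by
    have : 0 < y := by linarith
    positivity
  linarith

theorem isBigO_const_exp_div (c : ℝ) : (fun _ : ℝ => c) =O[atTop] fun x => exp x / x :=
  (isLittleO_const_left.2 <| Or.inr <|
    tendsto_norm_atTop_atTop.comp (by simpa using tendsto_exp_div_pow_atTop 1)).isBigO

theorem isBigO_integral_of_isBigO_exp_div {G : ℝ → ℝ} {a : ℝ}
    (hint : ∀ x, a ≤ x → IntervalIntegrable G volume a x)
    (hG : G =O[atTop] fun t => exp t / t) :
    (fun x => ∫ t in a..x, G t) =O[atTop] fun x => exp x / x := by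
  obtain ⟨C, hC0, hC⟩ := hG.exists_pos
  obtain ⟨x₀, hx₀⟩ := eventually_atTop.1 hC.bound
  set y := max (max x₀ 2) a
  have hy2 : 2 ≤ y := (le_max_right _ _).trans (le_max_left _ _)
  have hya : a ≤ y := le_max_right _ _
  have htail : (fun x => ∫ t in y..x, G t) =O[atTop] fun x => exp x / x := by
    refine IsBigO.of_bound (2 * C) ?_
    filter_upwards [eventually_ge_atTop y] with x hx
    have hbound : ∀ t ∈ Set.Ioc y x, ‖G t‖ ≤ C * (exp t / t) := fun t ht => by
      have ht0 : 0 < t := by linarith [ht.1]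
      simpa [abs_of_pos ht0] using
        hx₀ t (((le_max_left _ _).trans (le_max_left _ _)).trans ht.1.le)
    have hx0 : 0 < x := by linarith
    have hexp : IntervalIntegrable (fun t => exp t / t) volume y x :=
      (continuousOn_exp_div.mono fun t ht => by
        rw [Set.uIcc_of_le hx] at ht; exact (by linarith [ht.1] : (0 : ℝ) < t)).intervalIntegrable
    calc ‖∫ t in y..x, G t‖ ≤ ∫ t in y..x, C * (exp t / t) :=
          intervalIntegral.norm_integral_le_of_norm_le hx (ae_of_all _ hbound)
            (hexp.const_mul C)
      _ ≤ C * (2 * (exp x / x)) := by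
          rw [intervalIntegral.integral_const_mul]
          exact mul_le_mul_of_nonneg_left (integral_exp_div_le hy2 hx) hC0.le
      _ = 2 * C * ‖exp x / x‖ := by
          rw [norm_of_nonneg (by positivity)]; ring
  refine ((isBigO_const_exp_div (∫ t in a..y, G t)).add htail).congr' ?_ EventuallyEq.rfl
  filter_upwards [eventually_ge_atTop y] with x hx
  exact intervalIntegral.integral_add_adjacent_intervals (hint y hya)
    ((hint y hya).symm.trans (hint x (hya.trans hx)))

theorem isBigO_exp_mul_rpow_of_le {p q : ℝ} (hpq : p ≤ q) :
    (fun x => exp x * x ^ p) =O[atTop] fun x => exp x * x ^ q := by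
  refine IsBigO.of_bound 1 ?_
  filter_upwards [eventually_ge_atTop 1] with x hx
  rw [one_mul, norm_of_nonneg (by positivity), norm_of_nonneg (by positivity)]
  exact mul_le_mul_of_nonneg_left (rpow_le_rpow_of_exponent_le hx hpq) (exp_pos x).le

theorem Asymptotics.IsBigO.mul_rpow_of_exp_mul_rpow {f : ℝ → ℝ} {p q : ℝ}
    (h : f =O[atTop] fun x => exp x * x ^ p) :
    (fun x => f x * x ^ q) =O[atTop] fun x => exp x * x ^ (p + q) := by
  refine (h.mul (isBigO_refl (fun x => x ^ q) atTop)).congr' EventuallyEq.rfl ?_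
  filter_upwards [eventually_gt_atTop 0] with x hx
  rw [rpow_add hx, mul_assoc]


theorem mul_integral_indicator_Ici_rpow {k ρ x : ℝ} (hk : k ≠ 0) (hx : max 1 ρ ≤ x) :
    k * ∫ t in (1 : ℝ)..x, (Set.Ici ρ).indicator (fun t => t ^ (-(k + 1))) t
      = (max 1 ρ ^ k)⁻¹ - (x ^ k)⁻¹ := by
  have hM : (0 : ℝ) < max 1 ρ := one_pos.trans_le (le_max_left _ _)
  have h0 : (0 : ℝ) ∉ Set.uIcc (max 1 ρ) x := by
    rw [Set.uIcc_of_le hx]; exact fun h => hM.not_ge h.1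
  rw [intervalIntegral.integral_of_le ((le_max_left _ _).trans hx),
    setIntegral_indicator measurableSet_Ici,
    setIntegral_congr_set (EventuallyEq.rfl.inter Ioi_ae_eq_Ici.symm), Set.Ioc_inter_Ioi,
    ← intervalIntegral.integral_of_le hx,
    integral_rpow (Or.inr ⟨by contrapose! hk; linarith, h0⟩), show -(k + 1) + 1 = -k by ring,
    rpow_neg (hM.le.trans hx), rpow_neg hM.le]
  field_simp
  ring

theorem intervalIntegrable_indicator_Ici_rpow {k ρ x : ℝ} (hx : 1 ≤ x) :
    IntervalIntegrable ((Set.Ici ρ).indicator fun t => t ^ (-(k + 1))) volume 1 x := by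
  rw [intervalIntegrable_iff_integrableOn_Ioc_of_le hx]
  refine IntegrableOn.indicator ?_ measurableSet_Ici
  refine (ContinuousOn.integrableOn_Icc ?_).mono_set Set.Ioc_subset_Icc_self
  exact fun t ht =>
    (continuousAt_rpow_const t _ (Or.inl (one_pos.trans_le ht.1).ne')).continuousWithinAt

section PartialSums

variable {Γ : Type*} {r : Γ → ℝ} (hfin : ∀ x : ℝ, {γ : Γ | r γ ≤ x}.Finite)

theorem sum_mul_eq_sum_mul_indicator (f : Γ → ℝ) (w : ℝ → ℝ) {t x : ℝ} (htx : t ≤ x) :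
    (∑ γ ∈ (hfin t).toFinset, f γ) * w t
      = ∑ γ ∈ (hfin x).toFinset, f γ * (Set.Ici (r γ)).indicator w t := by
  classical
  have hsub : (hfin t).toFinset = (hfin x).toFinset.filter (r · ≤ t) := by
    ext γ
    simp only [Finset.mem_filter, Set.Finite.mem_toFinset, Set.mem_ofPred_eq]
    exact ⟨fun h => ⟨h.trans htx, h⟩, And.right⟩
  simp only [hsub, Finset.sum_filter, Finset.sum_mul, Set.indicator_apply, Set.mem_Ici, mul_ite,
    mul_zero, ite_mul, zero_mul]

theorem intervalIntegrable_sum_mul_rpow (f : Γ → ℝ) (k : ℝ) {x : ℝ} (hx : 1 ≤ x) :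
    IntervalIntegrable (fun t => (∑ γ ∈ (hfin t).toFinset, f γ) * t ^ (-(k + 1))) volume 1 x := by
  refine (IntervalIntegrable.sum (hfin x).toFinset fun γ _ =>
    (intervalIntegrable_indicator_Ici_rpow (ρ := r γ) (k := k) hx).const_mul (f γ)).congr ?_
  intro t ht
  rw [Set.uIoc_of_le hx] at ht
  simp only [Finset.sum_apply]
  exact (sum_mul_eq_sum_mul_indicator hfin f _ ht.2).symm

theorem sum_div_rpow_sub_eq_integral {k : ℝ} (hk : k ≠ 0) (f : Γ → ℝ) {x : ℝ} (hx : 1 ≤ x) :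
    ∑ γ ∈ (hfin x).toFinset, f γ / r γ ^ k - (∑ γ ∈ (hfin x).toFinset, f γ) / x ^ k
      = k * (∫ t in (1 : ℝ)..x, (∑ γ ∈ (hfin t).toFinset, f γ) * t ^ (-(k + 1)))
        + ∑ γ ∈ (hfin 1).toFinset, f γ * ((r γ ^ k)⁻¹ - 1) := by
  have hint : k * ∫ t in (1 : ℝ)..x, (∑ γ ∈ (hfin t).toFinset, f γ) * t ^ (-(k + 1))
      = ∑ γ ∈ (hfin x).toFinset, f γ * ((max 1 (r γ) ^ k)⁻¹ - (x ^ k)⁻¹) := by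
    rw [intervalIntegral.integral_congr (g := fun t => ∑ γ ∈ (hfin x).toFinset,
        f γ * (Set.Ici (r γ)).indicator (fun t => t ^ (-(k + 1))) t) fun t ht =>
        sum_mul_eq_sum_mul_indicator hfin f _ (Set.uIcc_of_le hx ▸ ht).2,
      intervalIntegral.integral_finsetSum fun γ _ =>
        (intervalIntegrable_indicator_Ici_rpow hx).const_mul (f γ),
      Finset.mul_sum]
    refine Finset.sum_congr rfl fun γ hγ => ?_
    have hγx : r γ ≤ x := by simpa using hγ
    rw [intervalIntegral.integral_const_mul, mul_left_comm,
      mul_integral_indicator_Ici_rpow hk (max_le hx hγx)]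
  have hcorr : ∑ γ ∈ (hfin x).toFinset, f γ * ((r γ ^ k)⁻¹ - (max 1 (r γ) ^ k)⁻¹)
      = ∑ γ ∈ (hfin 1).toFinset, f γ * ((r γ ^ k)⁻¹ - 1) := by
    have h1x : (hfin 1).toFinset ⊆ (hfin x).toFinset := fun γ hγ => by
      simp only [Set.Finite.mem_toFinset, Set.mem_ofPred_eq] at hγ ⊢
      exact hγ.trans hx
    rw [← Finset.sum_subset h1x fun γ _ hγ => ?_]
    · refine Finset.sum_congr rfl fun γ hγ => ?_
      simp only [Set.Finite.mem_toFinset, Set.mem_ofPred_eq] at hγ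
      rw [max_eq_left hγ, one_rpow, inv_one]
    · simp only [Set.Finite.mem_toFinset, Set.mem_ofPred_eq, not_le] at hγ
      rw [max_eq_right hγ.le, sub_self, mul_zero]
  rw [hint, ← hcorr, Finset.sum_div, ← Finset.sum_add_distrib, ← Finset.sum_sub_distrib]
  refine Finset.sum_congr rfl fun γ _ => ?_
  ring

theorem isBigO_sum_div_rpow_sub (f : Γ → ℝ) (k : ℝ)
    (hS : (fun x => ∑ γ ∈ (hfin x).toFinset, f γ) =O[atTop] fun x => exp x * x ^ k) :
    (fun x => ∑ γ ∈ (hfin x).toFinset, f γ / r γ ^ k - (∑ γ ∈ (hfin x).toFinset, f γ) / x ^ k)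
      =O[atTop] fun x => exp x / x := by
  rcases eq_or_ne k 0 with rfl | hk
  · simpa using isBigO_zero (fun x : ℝ => exp x / x) atTop
  have hG : (fun t => (∑ γ ∈ (hfin t).toFinset, f γ) * t ^ (-(k + 1)))
      =O[atTop] fun t => exp t / t :=
    hS.mul_rpow_of_exp_mul_rpow.congr_right fun t => by
      rw [show k + -(k + 1) = -1 by ring, rpow_neg_one, div_eq_mul_inv]
  have hint := isBigO_integral_of_isBigO_exp_div
    (fun x hx => intervalIntegrable_sum_mul_rpow hfin f k hx) hG
  have hconst := isBigO_const_exp_div (∑ γ ∈ (hfin 1).toFinset, f γ * ((r γ ^ k)⁻¹ - 1))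
  refine ((hint.const_mul_left k).add hconst).congr' ?_ EventuallyEq.rfl
  filter_upwards [eventually_ge_atTop 1] with x hx
  exact (sum_div_rpow_sub_eq_integral hfin hk f hx).symm

theorem isBigO_sum_div_pow_sub_mul_exp (f : Γ → ℝ) (m : ℕ) (c : ℝ)
    (h : (fun x => (∑ γ ∈ (hfin x).toFinset, f γ) - c * exp x * x ^ m)
      =O[atTop] fun x => exp x * x ^ ((m : ℝ) - 1)) :
    (fun x => (∑ γ ∈ (hfin x).toFinset, f γ / r γ ^ m) - c * exp x)
      =O[atTop] fun x => exp x / x := by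
  have hS : (fun x => ∑ γ ∈ (hfin x).toFinset, f γ) =O[atTop] fun x => exp x * x ^ (m : ℝ) := by
    have hlead := (isBigO_const_mul_self c (fun x => exp x * x ^ (m : ℝ)) atTop).congr_left
      fun x => by rw [rpow_natCast, ← mul_assoc]
    simpa using (h.trans (isBigO_exp_mul_rpow_of_le (sub_le_self _ zero_le_one))).add hlead
  have herr := h.mul_rpow_of_exp_mul_rpow (q := -m)
    |>.congr_right (g₂ := fun x => exp x / x) fun x => by
      rw [show (m : ℝ) - 1 + -m = -1 by ring, rpow_neg_one, div_eq_mul_inv]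
  refine ((isBigO_sum_div_rpow_sub hfin f m hS).add herr).congr' ?_ EventuallyEq.rfl
  filter_upwards [eventually_gt_atTop 0] with x hx
  simp only [rpow_natCast, rpow_neg hx.le]
  field_simp
  ring

theorem isBigO_sum_div_rpow (f : Γ → ℝ) {p k : ℝ} (hpk : p ≤ k) (hkp : k ≤ p + 1)
    (hS : (fun x => ∑ γ ∈ (hfin x).toFinset, f γ) =O[atTop] fun x => exp x * x ^ p) :
    (fun x => ∑ γ ∈ (hfin x).toFinset, f γ / r γ ^ k) =O[atTop] fun x => exp x * x ^ (p - k) := by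
  have hmain := (isBigO_sum_div_rpow_sub hfin f k (hS.trans (isBigO_exp_mul_rpow_of_le hpk))).trans
    ((isBigO_exp_mul_rpow_of_le (by linarith : -1 ≤ p - k)).congr_left fun x => by
      rw [rpow_neg_one, div_eq_mul_inv])
  have hrest := hS.mul_rpow_of_exp_mul_rpow (q := -k) |>.congr_right fun x => by
    rw [← sub_eq_add_neg]
  refine (hmain.add hrest).congr' ?_ EventuallyEq.rfl
  filter_upwards [eventually_gt_atTop 0] with x hx
  rw [rpow_neg hx.le, ← div_eq_mul_inv, sub_add_cancel]

end PartialSums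

theorem stmt_14_general {Γ : Type*} (r : Γ → ℝ) (a : Γ → ℝ) (B : ℕ → ℝ)
    (hfin : ∀ x : ℝ, {γ : Γ | r γ ≤ x}.Finite)
    (heven : ∀ m : ℕ,
      (fun x : ℝ => (∑ γ ∈ (hfin x).toFinset, a γ ^ (2 * m)) - B m * Real.exp x * x ^ m)
        =O[atTop] fun x => Real.exp x * x ^ ((m : ℝ) - 1))
    (hodd : ∀ m : ℕ,
      (fun x : ℝ => ∑ γ ∈ (hfin x).toFinset, a γ ^ (2 * m + 1)) =O[atTop]
        fun x => Real.exp x * x ^ m) :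
    (∀ m : ℕ,
      (fun x : ℝ => (∑ γ ∈ (hfin x).toFinset, a γ ^ (2 * m) / r γ ^ m) - B m * Real.exp x)
        =O[atTop] fun x => Real.exp x / x) ∧
    ∀ m : ℕ,
      (fun x : ℝ => ∑ γ ∈ (hfin x).toFinset, a γ ^ (2 * m + 1) / r γ ^ ((2 * m + 1 : ℝ) / 2))
        =O[atTop] fun x => Real.exp x * x ^ (-(1 : ℝ) / 2) := by
  refine ⟨fun m => isBigO_sum_div_pow_sub_mul_exp hfin _ m (B m) (heven m), fun m => ?_⟩
  have hS : (fun x => ∑ γ ∈ (hfin x).toFinset, a γ ^ (2 * m + 1)) =O[atTop]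
      fun x => exp x * x ^ (m : ℝ) := by
    simpa only [rpow_natCast] using hodd m
  refine (isBigO_sum_div_rpow hfin _ (by linarith) (by linarith) hS).congr_right fun x => ?_
  rw [show (m : ℝ) - (2 * m + 1) / 2 = -1 / 2 by ring]

/-- partial summation: if the even power sums satisfy
`Σ_{r γ ≤ x} a γ^{2m} = B_m eˣ xᵐ + O(eˣ x^{m-1})`, the odd power sums are `O(eˣ xᵐ)`,
`|a γ| ≤ K·r γ`, and the counting function is `O(eˣ)`, then the weighted sums
`Σ_{r γ ≤ x} a γⁿ / r γ^{n/2}` equal `B_m eˣ + O(eˣ/x)` for `n = 2m`, and are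
`O(eˣ x^{-1/2})` for `n = 2m+1` odd. -/
theorem stmt_14 {Γ : Type*} (r : Γ → ℝ) (a : Γ → ℝ) (B : ℕ → ℝ) (K : ℝ)
    (hrpos : ∀ γ, 0 < r γ)
    (hfin : ∀ x : ℝ, {γ : Γ | r γ ≤ x}.Finite)
    (hcount : (fun x : ℝ => (Nat.card {γ : Γ | r γ ≤ x} : ℝ)) =O[atTop]
      fun x => Real.exp x)
    (hbound : ∀ γ, |a γ| ≤ K * r γ)
    (heven : ∀ m : ℕ,
      (fun x : ℝ => (∑ γ ∈ (hfin x).toFinset, a γ ^ (2 * m)) - B m * Real.exp x * x ^ m)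
        =O[atTop] fun x => Real.exp x * x ^ ((m : ℝ) - 1))
    (hodd : ∀ m : ℕ,
      (fun x : ℝ => ∑ γ ∈ (hfin x).toFinset, a γ ^ (2 * m + 1)) =O[atTop]
        fun x => Real.exp x * x ^ m) :
    (∀ m : ℕ,
      (fun x : ℝ => (∑ γ ∈ (hfin x).toFinset, a γ ^ (2 * m) / r γ ^ m) - B m * Real.exp x)
        =O[atTop] fun x => Real.exp x / x) ∧
    ∀ m : ℕ,
      (fun x : ℝ => ∑ γ ∈ (hfin x).toFinset, a γ ^ (2 * m + 1) / r γ ^ ((2 * m + 1 : ℝ) / 2))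
        =O[atTop] fun x => Real.exp x * x ^ (-(1 : ℝ) / 2) :=
  stmt_14_general r a B hfin heven hodd
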